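/- Let L have weights (2,2,3,3), s := x_1+x_2+x_3+x_4 and δ := x_3 + x_4. The upsets of L restricted to [s, s+δ] are exactly the six sets: ∅, {s+δ}, [s+x_3, s+δ], [s+x_4, s+δ], (s, s+δ] = {s+x_3, s+x_4, s+δ}, and [s, s+δ]. -/

import Mathlib

/-- The subgroup of relations `p i • x_i - c` in the free abelian group on `x_1,…,x_n,c`. -/
def Lrel (n : ℕ) (p : Fin n → ℤ) : AddSubgroup ((Fin n → ℤ) × ℤ) :=
  AddSubgroup.closure {v | ∃ i : Fin n, v = (Pi.single i (p i), -1)}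

/-- The Geigle-Lenzing group `L = ⟨x_1,…,x_n,c⟩ / ⟨p_i x_i - c⟩`. -/
abbrev Lgrp (n : ℕ) (p : Fin n → ℤ) : Type :=
  ((Fin n → ℤ) × ℤ) ⧸ Lrel n p

/-- The generator `x_i` of `L`. -/
def Lx (n : ℕ) (p : Fin n → ℤ) (i : Fin n) : Lgrp n p :=
  QuotientAddGroup.mk (Pi.single i 1, 0)

/-- The canonical element `c` of `L`. -/
def Lc (n : ℕ) (p : Fin n → ℤ) : Lgrp n p :=
  QuotientAddGroup.mk (0, 1)

/-- The positive cone `L_+`, the submonoid generated by `x_1,…,x_n,c`. -/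
def Lplus (n : ℕ) (p : Fin n → ℤ) : AddSubmonoid (Lgrp n p) :=
  AddSubmonoid.closure (Set.range (Lx n p) ∪ {Lc n p})

namespace Stmt8

/-- The weight sequence `(2,2,3,3)`. -/
def w : Fin 4 → ℤ := ![2, 2, 3, 3]

/-- `s = x_1 + x_2 + x_3 + x_4`. -/
def s : Lgrp 4 w := ∑ i, Lx 4 w i

/-- `δ = x_3 + x_4`. -/
def dlt : Lgrp 4 w := Lx 4 w 2 + Lx 4 w 3

/-- The partial order on `L`: `a ≤ b` iff `b − a ∈ L_+`. -/
def le (a b : Lgrp 4 w) : Prop := b - a ∈ Lplus 4 w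

/-- The interval `[a, b]` in `L`. -/
def Icc (a b : Lgrp 4 w) : Set (Lgrp 4 w) := {z | le a z ∧ le z b}

/-- `J` is an upset of `L` restricted to `I`: `J ⊆ I` and `(J + L_+) ∩ I ⊆ J`. -/
def IsUpsetIn (I J : Set (Lgrp 4 w)) : Prop :=
  J ⊆ I ∧ ∀ a ∈ J, ∀ u ∈ Lplus 4 w, a + u ∈ I → a + u ∈ J

abbrev T := ℤ × ZMod 2 × ZMod 3

def phi : ((Fin 4 → ℤ) × ℤ) →+ T :=
  AddMonoidHom.mk' (fun x => (3 * x.1 0 + 3 * x.1 1 + 2 * x.1 2 + 2 * x.1 3 + 6 * x.2,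
    ((x.1 1 : ℤ) : ZMod 2), ((x.1 3 : ℤ) : ZMod 3)))
    (by
      intro x y
      simp only [Prod.fst_add, Prod.snd_add, Pi.add_apply, Prod.mk_add_mk, Prod.mk.injEq]
      refine ⟨by ring, by push_cast; ring, by push_cast; ring⟩)

lemma rel_le : Lrel 4 w ≤ phi.ker := by
  rw [Lrel, AddSubgroup.closure_le]
  rintro v ⟨i, rfl⟩
  fin_cases i <;>
    simp [AddMonoidHom.mem_ker, phi, w, Pi.single_apply, AddMonoidHom.mk'_apply, Prod.ext_iff] <;>
    decide

def Phi : Lgrp 4 w →+ T :=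
  QuotientAddGroup.lift (Lrel 4 w) phi fun x hx => rel_le hx

lemma Phi_mk (x : (Fin 4 → ℤ) × ℤ) : Phi (QuotientAddGroup.mk x) = phi x := rfl

lemma ker_phi (x : (Fin 4 → ℤ) × ℤ) (h : phi x = 0) : x ∈ Lrel 4 w := by
  obtain ⟨a, b⟩ := x
  have h1 : 3 * a 0 + 3 * a 1 + 2 * a 2 + 2 * a 3 + 6 * b = 0 := congrArg Prod.fst h
  have h2 : (2:ℤ) ∣ a 1 := by
    have := congrArg (fun q : T => q.2.1) h
    exact (ZMod.intCast_zmod_eq_zero_iff_dvd (a 1) 2).mp this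
  have h3 : (3:ℤ) ∣ a 3 := by
    have := congrArg (fun q : T => q.2.2) h
    exact (ZMod.intCast_zmod_eq_zero_iff_dvd (a 3) 3).mp this
  obtain ⟨k, hk⟩ : (2:ℤ) ∣ a 0 := by omega
  obtain ⟨m, hm⟩ := h2
  obtain ⟨l, hl⟩ : (3:ℤ) ∣ a 2 := by omega
  obtain ⟨n, hn⟩ := h3
  have key : (a, b) = k • ((Pi.single 0 (w 0), -1) : (Fin 4 → ℤ) × ℤ)
      + m • ((Pi.single 1 (w 1), -1) : (Fin 4 → ℤ) × ℤ)
      + l • ((Pi.single 2 (w 2), -1) : (Fin 4 → ℤ) × ℤ)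
      + n • ((Pi.single 3 (w 3), -1) : (Fin 4 → ℤ) × ℤ) := by
    refine Prod.ext ?_ ?_
    · funext j
      fin_cases j <;>
        simp [Pi.single_apply, w, Prod.fst_add] <;> omega
    · simp [Prod.snd_add]
      omega
  rw [key]
  have g : ∀ i : Fin 4, ((Pi.single i (w i), -1) : (Fin 4 → ℤ) × ℤ) ∈ Lrel 4 w :=
    fun i => AddSubgroup.subset_closure ⟨i, rfl⟩
  exact add_mem (add_mem (add_mem (zsmul_mem (g 0) k) (zsmul_mem (g 1) m))
    (zsmul_mem (g 2) l)) (zsmul_mem (g 3) n)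

lemma Phi_inj : Function.Injective Phi := by
  intro x y h
  induction x using QuotientAddGroup.induction_on with
  | H a =>
  induction y using QuotientAddGroup.induction_on with
  | H b =>
  have h' : phi a = phi b := h
  rw [QuotientAddGroup.eq]
  apply ker_phi
  rw [map_add, map_neg, h']
  simp


lemma Phi_x0 : Phi (Lx 4 w 0) = (3, 0, 0) := by
  rw [Lx, Phi_mk]
  simp [phi, AddMonoidHom.mk'_apply, Pi.single_apply, Prod.ext_iff]

lemma Phi_x1 : Phi (Lx 4 w 1) = (3, 1, 0) := by
  rw [Lx, Phi_mk]
  simp [phi, AddMonoidHom.mk'_apply, Pi.single_apply, Prod.ext_iff]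

lemma Phi_x2 : Phi (Lx 4 w 2) = (2, 0, 0) := by
  rw [Lx, Phi_mk]
  simp [phi, AddMonoidHom.mk'_apply, Pi.single_apply, Prod.ext_iff]

lemma Phi_x3 : Phi (Lx 4 w 3) = (2, 0, 1) := by
  rw [Lx, Phi_mk]
  simp [phi, AddMonoidHom.mk'_apply, Pi.single_apply, Prod.ext_iff]

lemma Phi_c : Phi (Lc 4 w) = (6, 0, 0) := by
  rw [Lc, Phi_mk]
  simp [phi, AddMonoidHom.mk'_apply, Prod.ext_iff]

lemma Phi_s : Phi s = (10, 1, 1) := by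
  rw [s, Fin.sum_univ_four, map_add, map_add, map_add, Phi_x0, Phi_x1, Phi_x2, Phi_x3]
  decide

lemma Phi_dlt : Phi dlt = (4, 0, 1) := by
  rw [dlt, map_add, Phi_x2, Phi_x3]
  decide

def Pred (q : T) : Prop :=
  0 ≤ q.1 ∧ (q.1 = 0 → q = 0) ∧ q.1 ≠ 1 ∧ (q.1 = 2 → q.2.1 = 0 ∧ q.2.2 ≠ 2)

lemma Pred.add {p q : T} (hp : Pred p) (hq : Pred q) : Pred (p + q) := by
  obtain ⟨hp0, hp1, hp2, hp3⟩ := hp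
  obtain ⟨hq0, hq1, hq2, hq3⟩ := hq
  have hfst : (p + q).1 = p.1 + q.1 := rfl
  refine ⟨by omega, ?_, by omega, ?_⟩
  · intro h
    have : p.1 = 0 ∧ q.1 = 0 := by omega
    rw [hp1 this.1, hq1 this.2]; simp
  · intro h
    have : (p.1 = 0 ∧ q.1 = 2) ∨ (p.1 = 2 ∧ q.1 = 0) := by omega
    rcases this with ⟨h0, h2⟩ | ⟨h2, h0⟩
    · rw [hp1 h0]; simpa using hq3 h2
    · rw [hq1 h0]; simpa using hp3 h2

lemma plus_pred {z : Lgrp 4 w} (hz : z ∈ Lplus 4 w) : Pred (Phi z) := by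
  induction hz using AddSubmonoid.closure_induction with
  | mem x hx =>
    rcases hx with ⟨i, rfl⟩ | rfl
    · have hv : Phi (Lx 4 w i) = (3, 0, 0) ∨ Phi (Lx 4 w i) = (3, 1, 0) ∨
          Phi (Lx 4 w i) = (2, 0, 0) ∨ Phi (Lx 4 w i) = (2, 0, 1) := by
        fin_cases i
        · exact Or.inl Phi_x0
        · exact Or.inr (Or.inl Phi_x1)
        · exact Or.inr (Or.inr (Or.inl Phi_x2))
        · exact Or.inr (Or.inr (Or.inr Phi_x3))
      rcases hv with hv | hv | hv | hv <;> rw [hv] <;>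
        exact ⟨by norm_num, by norm_num [Prod.ext_iff], by norm_num,
          by intro h; first | exact ⟨rfl, by decide⟩ | norm_num at h⟩
    · rw [Phi_c]
      exact ⟨by norm_num, by norm_num [Prod.ext_iff], by norm_num, by norm_num⟩
  | zero => rw [map_zero]; exact ⟨le_refl 0, fun _ => rfl, by norm_num, by norm_num⟩
  | add x y _ _ hx hy => rw [map_add]; exact hx.add hy

lemma eq_zero_of_both {u : Lgrp 4 w} (hu : u ∈ Lplus 4 w) (hnu : -u ∈ Lplus 4 w) :
    u = 0 := by
  have h1 := (plus_pred hu).1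
  have h2 := (plus_pred hnu).1
  rw [map_neg] at h2
  have h0 : (Phi u).1 = 0 := by
    have : (-(Phi u)).1 = -(Phi u).1 := rfl
    omega
  have := (plus_pred hu).2.1 h0
  apply Phi_inj
  rw [this, map_zero]


lemma x_mem (i : Fin 4) : Lx 4 w i ∈ Lplus 4 w :=
  AddSubmonoid.subset_closure (Or.inl ⟨i, rfl⟩)

lemma dlt_mem : dlt ∈ Lplus 4 w := add_mem (x_mem 2) (x_mem 3)

lemma ne_of_Phi {x y : Lgrp 4 w} (h : Phi x ≠ Phi y) : x ≠ y :=
  fun e => h (congrArg Phi e)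

lemma zmod3_key : ∀ e f : ZMod 3, e ≠ 2 → f ≠ 2 → e + f = 1 → e = 0 ∨ e = 1 := by decide

lemma mem_Icc_s (z : Lgrp 4 w) :
    z ∈ Icc s (s + dlt) ↔ z = s ∨ z = s + Lx 4 w 2 ∨ z = s + Lx 4 w 3 ∨ z = s + dlt := by
  constructor
  · rintro ⟨h1, h2⟩
    have hsum : (z - s) + (s + dlt - z) = dlt := by abel
    obtain ⟨u0, u1, u2, u3⟩ := plus_pred h1
    obtain ⟨v0, v1, v2, v3⟩ := plus_pred h2
    have hS : Phi (z - s) + Phi (s + dlt - z) = (4, 0, 1) := by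
      rw [← map_add, hsum, Phi_dlt]
    have hfst : (Phi (z - s)).1 + (Phi (s + dlt - z)).1 = 4 := congrArg Prod.fst hS
    have hd : (Phi (z - s)).1 = 0 ∨ (Phi (z - s)).1 = 2 ∨ (Phi (z - s)).1 = 4 := by omega
    rcases hd with hd | hd | hd
    · left
      have h0 := u1 hd
      have : z - s = 0 := Phi_inj (by rw [h0, map_zero])
      rw [sub_eq_zero] at this; exact this
    · have hv2 : (Phi (s + dlt - z)).1 = 2 := by omega
      obtain ⟨hu21, hu22⟩ := u3 hd
      obtain ⟨hv21, hv22⟩ := v3 hv2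
      have h3c : (Phi (z - s)).2.2 + (Phi (s + dlt - z)).2.2 = 1 :=
        congrArg (fun q : T => q.2.2) hS
      rcases zmod3_key _ _ hu22 hv22 h3c with h | h
      · right; left
        have he : Phi (z - s) = Phi (Lx 4 w 2) := by
          rw [Phi_x2]; exact Prod.ext hd (Prod.ext hu21 h)
        have := Phi_inj he
        rw [sub_eq_iff_eq_add] at this
        rw [this]; exact add_comm _ _
      · right; right; left
        have he : Phi (z - s) = Phi (Lx 4 w 3) := by
          rw [Phi_x3]; exact Prod.ext hd (Prod.ext hu21 h)
        have := Phi_inj he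
        rw [sub_eq_iff_eq_add] at this
        rw [this]; exact add_comm _ _
    · right; right; right
      have hv0 : (Phi (s + dlt - z)).1 = 0 := by omega
      have h0 := v1 hv0
      have : s + dlt - z = 0 := Phi_inj (by rw [h0, map_zero])
      rw [sub_eq_zero] at this; exact this.symm
  · have d2 : s + dlt - (s + Lx 4 w 2) = Lx 4 w 3 := by rw [dlt]; abel
    have d3 : s + dlt - (s + Lx 4 w 3) = Lx 4 w 2 := by rw [dlt]; abel
    rintro (rfl | rfl | rfl | rfl)
    · exact ⟨by rw [le, sub_self]; exact zero_mem _,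
        by rw [le, add_sub_cancel_left]; exact dlt_mem⟩
    · exact ⟨by rw [le, add_sub_cancel_left]; exact x_mem 2,
        by rw [le, d2]; exact x_mem 3⟩
    · exact ⟨by rw [le, add_sub_cancel_left]; exact x_mem 3,
        by rw [le, d3]; exact x_mem 2⟩
    · exact ⟨by rw [le, add_sub_cancel_left]; exact dlt_mem,
        by rw [le, sub_self]; exact zero_mem _⟩

lemma Icc_two (a b : Lgrp 4 w) (hdeg : (Phi (b - a)).1 = 2) :
    ∀ z ∈ Icc a b, z = a ∨ z = b := by
  rintro z ⟨h1, h2⟩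
  have hsum : (z - a) + (b - z) = b - a := by abel
  obtain ⟨u0, u1, _, _⟩ := plus_pred h1
  obtain ⟨v0, v1, _, _⟩ := plus_pred h2
  have hS : Phi (z - a) + Phi (b - z) = Phi (b - a) := by rw [← map_add, hsum]
  have hfst : (Phi (z - a)).1 + (Phi (b - z)).1 = 2 := by
    have h := congrArg Prod.fst hS
    rw [hdeg] at h; exact h
  have hd : (Phi (z - a)).1 = 0 ∨ (Phi (b - z)).1 = 0 := by omega
  rcases hd with hd | hd
  · left
    have h0 := u1 hd
    have : z - a = 0 := Phi_inj (by rw [h0, map_zero])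
    rw [sub_eq_zero] at this; exact this
  · right
    have h0 := v1 hd
    have : b - z = 0 := Phi_inj (by rw [h0, map_zero])
    rw [sub_eq_zero] at this; exact this.symm


lemma diff3 : s + dlt - (s + Lx 4 w 2) = Lx 4 w 3 := by rw [dlt]; abel
lemma diff2 : s + dlt - (s + Lx 4 w 3) = Lx 4 w 2 := by rw [dlt]; abel

lemma Icc_a3 : Icc (s + Lx 4 w 2) (s + dlt) = {s + Lx 4 w 2, s + dlt} := by
  ext z
  simp only [Set.mem_insert_iff, Set.mem_singleton_iff]
  constructor
  · exact fun hz => Icc_two _ _ (by rw [diff3, Phi_x3]) z hz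
  · rintro (rfl | rfl)
    · exact ⟨by rw [le, sub_self]; exact zero_mem _, by rw [le, diff3]; exact x_mem 3⟩
    · exact ⟨by rw [le, diff3]; exact x_mem 3, by rw [le, sub_self]; exact zero_mem _⟩

lemma Icc_a4 : Icc (s + Lx 4 w 3) (s + dlt) = {s + Lx 4 w 3, s + dlt} := by
  ext z
  simp only [Set.mem_insert_iff, Set.mem_singleton_iff]
  constructor
  · exact fun hz => Icc_two _ _ (by rw [diff2, Phi_x2]) z hz
  · rintro (rfl | rfl)
    · exact ⟨by rw [le, sub_self]; exact zero_mem _, by rw [le, diff2]; exact x_mem 2⟩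
    · exact ⟨by rw [le, diff2]; exact x_mem 2, by rw [le, sub_self]; exact zero_mem _⟩

lemma ne_s_a3 : s ≠ s + Lx 4 w 2 :=
  ne_of_Phi (by rw [map_add, Phi_s, Phi_x2]; decide)
lemma ne_s_a4 : s ≠ s + Lx 4 w 3 :=
  ne_of_Phi (by rw [map_add, Phi_s, Phi_x3]; decide)
lemma ne_s_t : s ≠ s + dlt :=
  ne_of_Phi (by rw [map_add, Phi_s, Phi_dlt]; decide)

lemma icc_upset (b : Lgrp 4 w) (hb : le s b) :
    IsUpsetIn (Icc s (s + dlt)) (Icc b (s + dlt)) := by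
  constructor
  · rintro z ⟨h1, h2⟩
    refine ⟨?_, h2⟩
    have h := add_mem h1 hb
    rw [le]; rwa [sub_add_sub_cancel] at h
  · rintro a ⟨h1, _⟩ u hu hin
    refine ⟨?_, hin.2⟩
    rw [le, add_sub_right_comm]
    exact add_mem h1 hu


/-- For weights `(2,2,3,3)`, the upsets restricted to `[s, s+δ]` with `δ = x_3+x_4`
are exactly the six sets `∅`, `{s+δ}`, `[s+x_3, s+δ]`, `[s+x_4, s+δ]`,
`(s, s+δ] = {s+x_3, s+x_4, s+δ}` and `[s, s+δ]`. -/
theorem upsets_of_interval (J : Set (Lgrp 4 w)) :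
    IsUpsetIn (Icc s (s + dlt)) J ↔
      (J = ∅ ∨ J = {s + dlt} ∨
        J = Icc (s + Lx 4 w 2) (s + dlt) ∨
        J = Icc (s + Lx 4 w 3) (s + dlt) ∨
        J = {s + Lx 4 w 2, s + Lx 4 w 3, s + dlt} ∨
        J = Icc s (s + dlt)) := by
  have hI3 : s + Lx 4 w 2 ∈ Icc s (s + dlt) := (mem_Icc_s _).mpr (Or.inr (Or.inl rfl))
  have hI4 : s + Lx 4 w 3 ∈ Icc s (s + dlt) := (mem_Icc_s _).mpr (Or.inr (Or.inr (Or.inl rfl)))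
  have hIt : s + dlt ∈ Icc s (s + dlt) := (mem_Icc_s _).mpr (Or.inr (Or.inr (Or.inr rfl)))
  constructor
  · rintro ⟨hJI, hup⟩
    have hmem : ∀ z ∈ J, z = s ∨ z = s + Lx 4 w 2 ∨ z = s + Lx 4 w 3 ∨ z = s + dlt :=
      fun z hz => (mem_Icc_s z).mp (hJI hz)
    have e3 : s + Lx 4 w 2 + Lx 4 w 3 = s + dlt := by rw [dlt]; abel
    have e4 : s + Lx 4 w 3 + Lx 4 w 2 = s + dlt := by rw [dlt]; abel
    have hs3 : s ∈ J → s + Lx 4 w 2 ∈ J := fun h => hup s h _ (x_mem 2) hI3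
    have hs4 : s ∈ J → s + Lx 4 w 3 ∈ J := fun h => hup s h _ (x_mem 3) hI4
    have hst : s ∈ J → s + dlt ∈ J := fun h => hup s h dlt dlt_mem hIt
    have h3t : s + Lx 4 w 2 ∈ J → s + dlt ∈ J := fun h => by
      have := hup _ h _ (x_mem 3) (by rw [e3]; exact hIt)
      rwa [e3] at this
    have h4t : s + Lx 4 w 3 ∈ J → s + dlt ∈ J := fun h => by
      have := hup _ h _ (x_mem 2) (by rw [e4]; exact hIt)
      rwa [e4] at this
    by_cases hs : s ∈ J
    · refine Or.inr (Or.inr (Or.inr (Or.inr (Or.inr ?_))))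
      ext z
      constructor
      · exact fun hz => hJI hz
      · intro hz
        rcases (mem_Icc_s z).mp hz with rfl | rfl | rfl | rfl
        exacts [hs, hs3 hs, hs4 hs, hst hs]
    · by_cases h3 : s + Lx 4 w 2 ∈ J <;> by_cases h4 : s + Lx 4 w 3 ∈ J
      · refine Or.inr (Or.inr (Or.inr (Or.inr (Or.inl ?_))))
        ext z
        simp only [Set.mem_insert_iff, Set.mem_singleton_iff]
        constructor
        · intro hz
          rcases hmem z hz with rfl | rfl | rfl | rfl
          exacts [absurd hz hs, Or.inl rfl, Or.inr (Or.inl rfl), Or.inr (Or.inr rfl)]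
        · rintro (rfl | rfl | rfl)
          exacts [h3, h4, h3t h3]
      · refine Or.inr (Or.inr (Or.inl ?_))
        rw [Icc_a3]
        ext z
        simp only [Set.mem_insert_iff, Set.mem_singleton_iff]
        constructor
        · intro hz
          rcases hmem z hz with rfl | rfl | rfl | rfl
          exacts [absurd hz hs, Or.inl rfl, absurd hz h4, Or.inr rfl]
        · rintro (rfl | rfl)
          exacts [h3, h3t h3]
      · refine Or.inr (Or.inr (Or.inr (Or.inl ?_)))
        rw [Icc_a4]
        ext z
        simp only [Set.mem_insert_iff, Set.mem_singleton_iff]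
        constructor
        · intro hz
          rcases hmem z hz with rfl | rfl | rfl | rfl
          exacts [absurd hz hs, absurd hz h3, Or.inl rfl, Or.inr rfl]
        · rintro (rfl | rfl)
          exacts [h4, h4t h4]
      · by_cases ht : s + dlt ∈ J
        · refine Or.inr (Or.inl ?_)
          ext z
          simp only [Set.mem_singleton_iff]
          constructor
          · intro hz
            rcases hmem z hz with rfl | rfl | rfl | rfl
            exacts [absurd hz hs, absurd hz h3, absurd hz h4, rfl]
          · rintro rfl; exact ht
        · refine Or.inl ?_
          ext z
          simp only [Set.mem_empty_iff_false, iff_false]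
          intro hz
          rcases hmem z hz with rfl | rfl | rfl | rfl
          exacts [hs hz, h3 hz, h4 hz, ht hz]
  · rintro (rfl | rfl | rfl | rfl | rfl | rfl)
    · exact ⟨Set.empty_subset _, fun a ha => absurd ha (Set.notMem_empty a)⟩
    · refine ⟨Set.singleton_subset_iff.mpr hIt, ?_⟩
      intro a ha u hu hin
      rw [Set.mem_singleton_iff] at ha; subst ha
      have e : s + dlt - (s + dlt + u) = -u := by abel
      have hneg : -u ∈ Lplus 4 w := by
        have h2 := hin.2
        rw [le, e] at h2
        exact h2
      have hu0 := eq_zero_of_both hu hneg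
      rw [Set.mem_singleton_iff, hu0, add_zero]
    · exact icc_upset _ (by rw [le, add_sub_cancel_left]; exact x_mem 2)
    · exact icc_upset _ (by rw [le, add_sub_cancel_left]; exact x_mem 3)
    · constructor
      · intro z hz
        simp only [Set.mem_insert_iff, Set.mem_singleton_iff] at hz
        rcases hz with rfl | rfl | rfl
        exacts [hI3, hI4, hIt]
      · intro a ha u hu hin
        simp only [Set.mem_insert_iff, Set.mem_singleton_iff] at ha ⊢
        rcases (mem_Icc_s _).mp hin with he | he | he | he
        · exfalso
          have has : a - s ∈ Lplus 4 w := by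
            rcases ha with rfl | rfl | rfl <;> rw [add_sub_cancel_left]
            exacts [x_mem 2, x_mem 3, dlt_mem]
          have hnu : -u = a - s := by rw [← he]; abel
          have hu0 : u = 0 := eq_zero_of_both hu (by rw [hnu]; exact has)
          rw [hu0, add_zero] at he
          rcases ha with rfl | rfl | rfl
          exacts [ne_s_a3 he.symm, ne_s_a4 he.symm, ne_s_t he.symm]
        · exact Or.inl he
        · exact Or.inr (Or.inl he)
        · exact Or.inr (Or.inr he)
    · exact icc_upset s (by rw [le, sub_self]; exact zero_mem _)

end Stmt8
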